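/- arXiv:2511.22918 — 2 statements merged into one kernel-verified Lean document; each statement's English description precedes it below -/
import Mathlib

section
/- For every integer n ≥ 2, the function g(x) = xⁿ + n·xⁿ⁻¹ − 1 is strictly increasing on [0,1], satisfies g((1/(n+1))^(1/(n-1))) < 0 and g((1/n)^(1/(n-1))) > 0, and hence has a unique root x₀ in the open interval ((1/(n+1))^(1/(n-1)), (1/n)^(1/(n-1))). -/
/-!
Since `g(x) = xⁿ + n xⁿ⁻¹ - 1` is a sum of increasing powers, it is strictly increasing
on `[0, ∞)`. At a point `r` with `rⁿ⁻¹ = c` it takes the value `c r + n c - 1`; for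
`c = 1/(n+1)` this is `(r - 1)/(n+1) < 0`, and for `c = 1/n` it is `r/n > 0`. The intermediate
value theorem and strict monotonicity then give exactly one root between the two points.
-/

open Set

theorem existsUnique_mem_Ioo_eq_of_strictMonoOn {α δ : Type*}
    [ConditionallyCompleteLinearOrder α] [TopologicalSpace α] [OrderTopology α] [DenselyOrdered α]
    [LinearOrder δ] [TopologicalSpace δ] [OrderClosedTopology δ] {f : α → δ} {a b : α} {y : δ}
    (hab : a ≤ b) (hf : StrictMonoOn f (Icc a b)) (hcont : ContinuousOn f (Icc a b)) (ha : f a < y)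
    (hb : y < f b) : ∃! x, x ∈ Ioo a b ∧ f x = y := by
  obtain ⟨x, hx, hfx⟩ := intermediate_value_Ioo hab hcont ⟨ha, hb⟩
  exact ⟨x, ⟨hx, hfx⟩, fun z ⟨hz, hfz⟩ =>
    hf.injOn (Ioo_subset_Icc_self hz) (Ioo_subset_Icc_self hx) (hfz.trans hfx.symm)⟩

theorem Real.rpow_one_div_natCast_sub_one_pow {c : ℝ} (hc : 0 ≤ c) {n : ℕ} (hn : 2 ≤ n) :
    (c ^ (1 / ((n : ℝ) - 1))) ^ (n - 1) = c := by
  have hcast : (((n - 1 : ℕ) : ℝ))⁻¹ = 1 / ((n : ℝ) - 1) := by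
    rw [Nat.cast_sub (by omega), Nat.cast_one, one_div]
  rw [← hcast, Real.rpow_inv_natCast_pow hc (by omega)]

namespace LastClick

noncomputable def g (n : ℕ) (x : ℝ) : ℝ := x ^ n + n * x ^ (n - 1) - 1

theorem strictMonoOn_g {n : ℕ} (hn : n ≠ 0) : StrictMonoOn (g n) (Ici 0) := by
  intro x hx y hy hxy
  have hpow : x ^ n < y ^ n := pow_lt_pow_left₀ hxy hx hn
  have hpow_pred : x ^ (n - 1) ≤ y ^ (n - 1) := pow_le_pow_left₀ hx hxy.le _
  have hmul : (n : ℝ) * x ^ (n - 1) ≤ n * y ^ (n - 1) :=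
    mul_le_mul_of_nonneg_left hpow_pred (Nat.cast_nonneg n)
  simp only [g]
  linarith

theorem g_eq_of_pow_pred_eq {n : ℕ} (hn : n ≠ 0) {r c : ℝ} (hr : r ^ (n - 1) = c) :
    g n r = c * r + n * c - 1 := by
  obtain ⟨m, rfl⟩ := Nat.exists_eq_succ_of_ne_zero hn
  rw [Nat.succ_sub_one] at hr
  simp only [g, Nat.succ_sub_one, pow_succ, hr]

theorem g_neg_of_pow_pred_eq_inv_succ {n : ℕ} (hn : n ≠ 0) {r : ℝ} (hr1 : r < 1)
    (hr : r ^ (n - 1) = 1 / ((n : ℝ) + 1)) : g n r < 0 := by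
  rw [g_eq_of_pow_pred_eq hn hr]
  have hsucc : (0 : ℝ) < n + 1 := by positivity
  have : 1 / ((n : ℝ) + 1) * r + n * (1 / (n + 1)) - 1 = (r - 1) / (n + 1) := by
    field_simp; ring
  rw [this]
  exact div_neg_of_neg_of_pos (by linarith) hsucc

theorem g_pos_of_pow_pred_eq_inv {n : ℕ} (hn : n ≠ 0) {r : ℝ} (hr0 : 0 < r)
    (hr : r ^ (n - 1) = 1 / (n : ℝ)) : 0 < g n r := by
  rw [g_eq_of_pow_pred_eq hn hr]
  have hnpos : (0 : ℝ) < n := by positivity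
  have : 1 / (n : ℝ) * r + n * (1 / n) - 1 = r / n := by
    field_simp; ring
  rw [this]
  positivity

end LastClick

open LastClick in
theorem stmt_1 (n : ℕ) (hn : 2 ≤ n) :
    StrictMonoOn (fun x : ℝ => x^n + n * x^(n-1) - 1) (Set.Icc 0 1) ∧
    (fun x : ℝ => x^n + n * x^(n-1) - 1) (((1:ℝ)/(n+1)) ^ ((1:ℝ)/(n-1))) < 0 ∧
    (fun x : ℝ => x^n + n * x^(n-1) - 1) (((1:ℝ)/n) ^ ((1:ℝ)/(n-1))) > 0 ∧
    ∃! x₀ : ℝ, x₀ ∈ Set.Ioo (((1:ℝ)/(n+1)) ^ ((1:ℝ)/(n-1))) (((1:ℝ)/n) ^ ((1:ℝ)/(n-1))) ∧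
      x₀^n + n * x₀^(n-1) - 1 = 0 := by
  have hn0 : n ≠ 0 := by omega
  have hn2 : (2 : ℝ) ≤ n := by exact_mod_cast hn
  have hexp : (0 : ℝ) < 1 / ((n : ℝ) - 1) := by apply div_pos <;> linarith
  have hc₁ : (0 : ℝ) < 1 / ((n : ℝ) + 1) := by positivity
  have hc₂ : (0 : ℝ) < 1 / (n : ℝ) := by positivity
  set a := (1 / ((n : ℝ) + 1)) ^ (1 / ((n : ℝ) - 1))
  set b := (1 / (n : ℝ)) ^ (1 / ((n : ℝ) - 1))
  have hab : a < b :=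
    Real.rpow_lt_rpow hc₁.le (one_div_lt_one_div_of_lt (by linarith) (by linarith)) hexp
  have hb1 : b ≤ 1 :=
    Real.rpow_le_one hc₂.le (div_le_one_of_le₀ (by linarith) (by linarith)) hexp.le
  have hga : g n a < 0 := g_neg_of_pow_pred_eq_inv_succ hn0 (hab.trans_le hb1)
    (Real.rpow_one_div_natCast_sub_one_pow hc₁.le hn)
  have hgb : 0 < g n b := g_pos_of_pow_pred_eq_inv hn0 (Real.rpow_pos_of_pos hc₂ _)
    (Real.rpow_one_div_natCast_sub_one_pow hc₂.le hn)
  have hmono : StrictMonoOn (g n) (Icc a b) :=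
    (strictMonoOn_g hn0).mono fun x hx => (Real.rpow_pos_of_pos hc₁ _).le.trans hx.1
  have hcont : ContinuousOn (g n) (Icc a b) := by unfold g; fun_prop
  exact ⟨(strictMonoOn_g hn0).mono Icc_subset_Ici_self, hga, hgb,
    existsUnique_mem_Ioo_eq_of_strictMonoOn hab.le hmono hcont hga hgb⟩
end

section
/- Let X be a random variable on (−∞, 0] with continuous CDF F and density f, let m ≤ 0, and let x: (−∞,0] → [0,1] be non-increasing with ∫ x(t) f(t) dt > 0 and ∫_m^0 x(t) f(t) dt > 0. Then (∫_m^0 x(t) f(t) dt) / (∫_{−∞}^0 x(t) f(t) dt) ≤ 1 − F(m), with equality when x is constant. -/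
open MeasureTheory Set

theorem stmt_18 (F f x : ℝ → ℝ) (m : ℝ) (hm : m ≤ 0)
    (hf : ∀ t, 0 ≤ f t)
    (hF : ∀ t, t ≤ 0 → F t = ∫ s in Set.Iic t, f s)
    (hF0 : F 0 = 1)
    (hFcont : Continuous F)
    (hx01 : ∀ t ∈ Set.Iic (0:ℝ), x t ∈ Set.Icc (0:ℝ) 1)
    (hanti : AntitoneOn x (Set.Iic (0:ℝ)))
    (hint : MeasureTheory.IntegrableOn (fun t => x t * f t) (Set.Iic (0:ℝ)))
    (hpos : 0 < ∫ t in Set.Iic (0:ℝ), x t * f t)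
    (hposm : 0 < ∫ t in m..0, x t * f t) :
    (∫ t in m..0, x t * f t) / (∫ t in Set.Iic (0:ℝ), x t * f t) ≤ 1 - F m ∧
    ((∀ t ∈ Set.Iic (0:ℝ), x t = x m) →
      (∫ t in m..0, x t * f t) / (∫ t in Set.Iic (0:ℝ), x t * f t) = 1 - F m) := by
  have hint1 : ∫ s in Set.Iic (0:ℝ), f s = 1 := by rw [← hF 0 le_rfl]; exact hF0
  have hintf0 : IntegrableOn f (Set.Iic (0:ℝ)) := by
    by_contra h
    rw [integral_undef h] at hint1
    norm_num at hint1
  have hintfm : IntegrableOn f (Set.Iic m) := hintf0.mono_set (Set.Iic_subset_Iic.mpr hm)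
  have hintfI : IntegrableOn f (Set.Ioc m 0) := hintf0.mono_set Set.Ioc_subset_Iic_self
  have hintxm : IntegrableOn (fun t => x t * f t) (Set.Iic m) :=
    hint.mono_set (Set.Iic_subset_Iic.mpr hm)
  have hintxI : IntegrableOn (fun t => x t * f t) (Set.Ioc m 0) :=
    hint.mono_set Set.Ioc_subset_Iic_self
  have hFm : F m = ∫ s in Set.Iic m, f s := hF m hm
  have hFm0 : 0 ≤ F m := by
    rw [hFm]; exact setIntegral_nonneg measurableSet_Iic (fun t _ => hf t)
  have hFm1 : F m ≤ 1 := by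
    rw [hFm, ← hint1]
    exact setIntegral_mono_set hintf0 (Filter.Eventually.of_forall (fun t => hf t))
      ((Set.Iic_subset_Iic.mpr hm).eventuallyLE)
  have hmm : m ∈ Set.Iic (0:ℝ) := hm
  have hsplitf : (∫ s in Set.Iic m, f s) + ∫ s in Set.Ioc m 0, f s = 1 := by
    rw [← hint1, ← Set.Iic_union_Ioc_eq_Iic hm,
      setIntegral_union (Set.Iic_disjoint_Ioc le_rfl) measurableSet_Ioc hintfm hintfI]
  have hfI : ∫ s in Set.Ioc m 0, f s = 1 - F m := by rw [hFm]; linarith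
  have hsplit : ∫ t in Set.Iic (0:ℝ), x t * f t =
      (∫ t in Set.Iic m, x t * f t) + ∫ t in Set.Ioc m 0, x t * f t := by
    rw [← Set.Iic_union_Ioc_eq_Iic hm,
      setIntegral_union (Set.Iic_disjoint_Ioc le_rfl) measurableSet_Ioc hintxm hintxI]
  have hA : ∫ t in Set.Ioc m 0, x t * f t ≤ x m * (1 - F m) := by
    calc ∫ t in Set.Ioc m 0, x t * f t ≤ ∫ t in Set.Ioc m 0, x m * f t := by
          refine setIntegral_mono_on hintxI (hintfI.const_mul _) measurableSet_Ioc ?_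
          intro t ht
          exact mul_le_mul_of_nonneg_right (hanti hmm ht.2 ht.1.le) (hf t)
      _ = x m * ∫ t in Set.Ioc m 0, f t := integral_const_mul _ _
      _ = x m * (1 - F m) := by rw [hfI]
  have hB : x m * F m ≤ ∫ t in Set.Iic m, x t * f t := by
    calc x m * F m = ∫ t in Set.Iic m, x m * f t := by
          rw [integral_const_mul, hFm]
      _ ≤ ∫ t in Set.Iic m, x t * f t := by
          refine setIntegral_mono_on (hintfm.const_mul _) hintxm measurableSet_Iic ?_
          intro t ht
          exact mul_le_mul_of_nonneg_right (hanti (le_trans ht hm) hmm ht) (hf t)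
  have hIoc : (∫ t in m..0, x t * f t) = ∫ t in Set.Ioc m 0, x t * f t :=
    intervalIntegral.integral_of_le hm
  constructor
  · rw [hIoc, div_le_iff₀ hpos, hsplit]
    nlinarith [mul_le_mul_of_nonneg_left hA hFm0,
      mul_le_mul_of_nonneg_left hB (by linarith : (0:ℝ) ≤ 1 - F m)]
  · intro hconst
    have hA' : ∫ t in Set.Ioc m 0, x t * f t = x m * (1 - F m) := by
      rw [show (∫ t in Set.Ioc m 0, x t * f t) = ∫ t in Set.Ioc m 0, x m * f t from
        setIntegral_congr_fun measurableSet_Ioc (fun t ht => by rw [hconst t ht.2]),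
        integral_const_mul, hfI]
    have hT : ∫ t in Set.Iic (0:ℝ), x t * f t = x m := by
      rw [show (∫ t in Set.Iic (0:ℝ), x t * f t) = ∫ t in Set.Iic (0:ℝ), x m * f t from
        setIntegral_congr_fun measurableSet_Iic (fun t ht => by rw [hconst t ht]),
        integral_const_mul, hint1, mul_one]
    have hxm : x m ≠ 0 := by
      intro h
      rw [hIoc, hA', h, zero_mul] at hposm
      exact lt_irrefl 0 hposm
    rw [hIoc, hA', hT, mul_comm, mul_div_assoc, div_self hxm, mul_one]
end
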